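/- arXiv:2604.19158 — 4 statements merged into one kernel-verified Lean document; each statement's English description precedes it below -/
import Mathlib

section
/- The tie count μ_B is the largest t ∈ {0, 1, ..., b} such that R(t) = 0, where R(0) = 0 by convention; equivalently, for every t ∈ {0, 1, ..., b}, R(t) = 0 holds if and only if t ≤ μ_B. -/
/-! A product `∏ a ∈ D, (x i - x a)` vanishes exactly when `D` contains an index tied with `i`,
so the sum of squares `R t` vanishes exactly when every `(b - t + 1)`-subset of `B` meets the tie
set. That happens iff the `b - μ_B` untied indices do not fill such a subset, i.e. iff
`b - μ_B < b - t + 1`, i.e. iff `t ≤ μ_B`. -/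

open Finset

theorem forall_mem_powersetCard_exists_iff_card_filter_not_lt {α : Type*} {s : Finset α}
    {p : α → Prop} [DecidablePred p] {k : ℕ} :
    (∀ D ∈ s.powersetCard k, ∃ a ∈ D, p a) ↔ #(s.filter (¬p ·)) < k := by
  constructor
  · intro h
    by_contra! hk
    obtain ⟨D, hD, rfl⟩ := exists_subset_card_eq hk
    obtain ⟨a, ha, hpa⟩ := h D (mem_powersetCard.2 ⟨hD.trans (filter_subset _ _), rfl⟩)
    exact (mem_filter.1 (hD ha)).2 hpa
  · intro hk D hD
    rw [mem_powersetCard] at hD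
    by_contra! hD'
    have hDsub : D ⊆ s.filter (¬p ·) := fun a ha => mem_filter.2 ⟨hD.1 ha, hD' a ha⟩
    exact (card_le_card hDsub).not_gt (hD.2 ▸ hk)

theorem sum_sq_prod_sub_eq_zero_iff {ι R : Type*} [CommRing R] [LinearOrder R]
    [IsStrictOrderedRing R] (x : ι → R) (c : R) (𝒟 : Finset (Finset ι)) :
    ∑ D ∈ 𝒟, (∏ a ∈ D, (c - x a)) ^ 2 = 0 ↔ ∀ D ∈ 𝒟, ∃ a ∈ D, x a = c := by
  simp only [sum_eq_zero_iff_of_nonneg (fun _ _ => sq_nonneg _), pow_eq_zero_iff two_ne_zero,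
    prod_eq_zero_iff, sub_eq_zero, eq_comm (a := c)]

theorem stmt_3_general {ι : Type*} (x : ι → ℝ) (i : ι) (B : Finset ι)
    (R : ℕ → ℝ) (hR0 : R 0 = 0)
    (hR : ∀ t, 1 ≤ t → t ≤ B.card →
      R t = ∑ D ∈ Finset.powersetCard (B.card - t + 1) B, (∏ a ∈ D, (x i - x a)) ^ 2) :
    ∀ t ≤ B.card, (R t = 0 ↔ t ≤ (B.filter (fun a => x a = x i)).card) := by
  intro t ht
  rcases Nat.eq_zero_or_pos t with rfl | ht0
  · simp [hR0]
  rw [hR t ht0 ht, sum_sq_prod_sub_eq_zero_iff,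
    forall_mem_powersetCard_exists_iff_card_filter_not_lt]
  have hsplit := card_filter_add_card_filter_not (s := B) (fun a => x a = x i)
  omega

theorem stmt_3 {ι : Type*} [DecidableEq ι] (x : ι → ℝ) (i : ι) (B : Finset ι)
    (hi : i ∉ B) (R : ℕ → ℝ) (hR0 : R 0 = 0)
    (hR : ∀ t, 1 ≤ t → t ≤ B.card →
      R t = ∑ D ∈ Finset.powersetCard (B.card - t + 1) B, (∏ a ∈ D, (x i - x a)) ^ 2) :
    ∀ t ≤ B.card, (R t = 0 ↔ t ≤ (B.filter (fun a => x a = x i)).card) :=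
  stmt_3_general x i B R hR0 hR
end

section
/- The quantity Π = Σ_{D ⊆ B, |D| = b − μ_B} ∏_{a ∈ D} (x_i − x_a) is never zero, and its sign equals (−1)^{|{a ∈ B : x_a > x_i}|}: Π > 0 if and only if |{a ∈ B : x_a > x_i}| is even, and Π < 0 if and only if |{a ∈ B : x_a > x_i}| is odd. -/
/-!
Only the subsets avoiding every `a` with `x a = x i` give a nonzero product, and among the subsets
of `B` of size `b - μ_B` there is exactly one such, `C = {a ∈ B | x a ≠ x i}`. So `Π` is the single
product `∏_{a ∈ C} (x i - x a)`, whose factors are nonzero and negative exactly for `x a > x i`.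
-/

open Finset

namespace Finset

variable {ι R : Type*}

theorem sum_powersetCard_prod_eq_prod_of_eq_zero [CommSemiring R] {f : ι → R} {s B : Finset ι}
    (hsB : s ⊆ B) (hzero : ∀ a ∈ B, a ∉ s → f a = 0) :
    ∑ D ∈ powersetCard #s B, ∏ a ∈ D, f a = ∏ a ∈ s, f a := by
  refine sum_eq_single_of_mem s (mem_powersetCard.2 ⟨hsB, rfl⟩) fun D hD hDs => ?_
  obtain ⟨hDB, hcard⟩ := mem_powersetCard.1 hD
  obtain ⟨a, haD, has⟩ := not_subset.1 fun h => hDs (eq_of_subset_of_card_le h hcard.ge)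
  exact prod_eq_zero haD (hzero a (hDB haD) has)

theorem zero_lt_neg_one_pow_card_filter_neg_mul_prod [CommRing R] [LinearOrder R]
    [IsStrictOrderedRing R] {f : ι → R} {s : Finset ι} (hf : ∀ a ∈ s, f a ≠ 0) :
    0 < (-1) ^ #{a ∈ s | f a < 0} * ∏ a ∈ s, f a := by
  rw [← prod_filter_mul_prod_filter_not s (fun a => f a < 0), ← mul_assoc, ← prod_const,
    ← prod_mul_distrib]
  refine mul_pos (prod_pos fun a ha => ?_) (prod_pos fun a ha => ?_)
  · simpa using (mem_filter.1 ha).2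
  · obtain ⟨has, hnonneg⟩ := mem_filter.1 ha
    exact (not_lt.1 hnonneg).lt_of_ne' (hf a has)

end Finset

theorem ne_zero_and_pos_iff_even_and_neg_iff_odd_of_neg_one_pow_mul_pos {R : Type*} [Ring R]
    [LinearOrder R] [IsStrictOrderedRing R] {k : ℕ} {p : R} (h : 0 < (-1) ^ k * p) :
    p ≠ 0 ∧ (0 < p ↔ Even k) ∧ (p < 0 ↔ Odd k) := by
  rcases k.even_or_odd with hk | hk
  · rw [hk.neg_one_pow, one_mul] at h
    exact ⟨h.ne', iff_of_true h hk, iff_of_false h.not_gt (Nat.not_odd_iff_even.2 hk)⟩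
  · rw [hk.neg_one_pow, neg_one_mul, neg_pos] at h
    exact ⟨h.ne, iff_of_false h.not_gt (Nat.not_even_iff_odd.2 hk), iff_of_true h hk⟩

theorem stmt_7_general {ι : Type*} (x : ι → ℝ) (i : ι) (B : Finset ι) :
    (∑ D ∈ Finset.powersetCard (B.card - (B.filter (fun a => x a = x i)).card) B,
        ∏ a ∈ D, (x i - x a)) ≠ 0 ∧
    (0 < (∑ D ∈ Finset.powersetCard (B.card - (B.filter (fun a => x a = x i)).card) B,
        ∏ a ∈ D, (x i - x a)) ↔ Even (B.filter (fun a => x a > x i)).card) ∧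
    ((∑ D ∈ Finset.powersetCard (B.card - (B.filter (fun a => x a = x i)).card) B,
        ∏ a ∈ D, (x i - x a)) < 0 ↔ Odd (B.filter (fun a => x a > x i)).card) := by
  set C := B.filter (fun a => ¬x a = x i)
  have hcard : #B - #(B.filter (fun a => x a = x i)) = #C := by
    rw [← card_filter_add_card_filter_not (s := B) (fun a => x a = x i)]
    exact Nat.add_sub_cancel_left _ _
  have hsum : ∑ D ∈ powersetCard #C B, ∏ a ∈ D, (x i - x a) = ∏ a ∈ C, (x i - x a) :=
    sum_powersetCard_prod_eq_prod_of_eq_zero (filter_subset _ B) fun a haB haC => by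
      rw [not_not.1 fun h => haC (mem_filter.2 ⟨haB, h⟩), sub_self]
  have hneg : C.filter (fun a => x i - x a < 0) = B.filter (fun a => x a > x i) := by
    rw [filter_filter]
    exact filter_congr fun a _ => by rw [sub_neg, and_iff_right_of_imp fun h => h.ne']
  have hpos := zero_lt_neg_one_pow_card_filter_neg_mul_prod (f := fun a => x i - x a) (s := C)
    fun a ha => sub_ne_zero.2 fun h => (mem_filter.1 ha).2 h.symm
  rw [hneg] at hpos
  rw [hcard, hsum]
  exact ne_zero_and_pos_iff_even_and_neg_iff_odd_of_neg_one_pow_mul_pos hpos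

theorem stmt_7 {ι : Type*} [DecidableEq ι] (x : ι → ℝ) (i : ι) (B : Finset ι)
    (hi : i ∉ B) :
    (∑ D ∈ Finset.powersetCard (B.card - (B.filter (fun a => x a = x i)).card) B,
        ∏ a ∈ D, (x i - x a)) ≠ 0 ∧
    (0 < (∑ D ∈ Finset.powersetCard (B.card - (B.filter (fun a => x a = x i)).card) B,
        ∏ a ∈ D, (x i - x a)) ↔ Even (B.filter (fun a => x a > x i)).card) ∧
    ((∑ D ∈ Finset.powersetCard (B.card - (B.filter (fun a => x a = x i)).card) B,
        ∏ a ∈ D, (x i - x a)) < 0 ↔ Odd (B.filter (fun a => x a > x i)).card) :=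
  stmt_7_general x i B
end

section
/- The sign of Π equals the sign of P(i, B^≠) = ∏_{a ∈ B^≠} (x_i − x_a): Π and P(i, B^≠) are equal, both are nonzero, and Π > 0 ↔ P(i, B^≠) > 0. -/
/-! Every term of Π indexed by a set `D` that meets `{a ∈ B : x a = x i}` contains a zero factor.
The only subset of `B` of size `b - μ_B` avoiding that set is `B^≠` itself, so `Π = P(i, B^≠)`,
which is a product of nonzero reals. -/

namespace Finset

variable {ι R : Type*} [CommSemiring R]

theorem sum_powersetCard_prod_eq_prod_filter (B : Finset ι) (p : ι → Prop) [DecidablePred p]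
    (f : ι → R) (hf : ∀ a ∈ B, ¬ p a → f a = 0) :
    ∑ D ∈ B.powersetCard #(B.filter p), ∏ a ∈ D, f a = ∏ a ∈ B.filter p, f a := by
  refine sum_eq_single_of_mem _ (mem_powersetCard.2 ⟨filter_subset _ _, rfl⟩) ?_
  intro D hD hDne
  obtain ⟨hDB, hDcard⟩ := mem_powersetCard.1 hD
  have hDsub : ¬ D ⊆ B.filter p := fun h => hDne (eq_of_subset_of_card_le h hDcard.ge)
  obtain ⟨a, haD, haP⟩ := not_subset.1 hDsub
  exact prod_eq_zero haD (hf a (hDB haD) fun ha => haP (mem_filter.2 ⟨hDB haD, ha⟩))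

end Finset

theorem stmt_8_general {ι : Type*} (x : ι → ℝ) (i : ι) (B : Finset ι) :
    (∑ D ∈ Finset.powersetCard (B.card - (B.filter (fun a => x a = x i)).card) B,
        ∏ a ∈ D, (x i - x a)) = (∏ a ∈ B.filter (fun a => x a ≠ x i), (x i - x a)) ∧
    (∑ D ∈ Finset.powersetCard (B.card - (B.filter (fun a => x a = x i)).card) B,
        ∏ a ∈ D, (x i - x a)) ≠ 0 ∧
    (∏ a ∈ B.filter (fun a => x a ≠ x i), (x i - x a)) ≠ 0 ∧
    (0 < (∑ D ∈ Finset.powersetCard (B.card - (B.filter (fun a => x a = x i)).card) B,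
        ∏ a ∈ D, (x i - x a)) ↔
      0 < ∏ a ∈ B.filter (fun a => x a ≠ x i), (x i - x a)) := by
  have hcard : B.card - (B.filter (fun a => x a = x i)).card
      = (B.filter (fun a => x a ≠ x i)).card := by
    have := B.card_filter_add_card_filter_not (fun a => x a = x i)
    simp only [ne_eq]
    omega
  have hsum : ∑ D ∈ Finset.powersetCard (B.card - (B.filter (fun a => x a = x i)).card) B,
      ∏ a ∈ D, (x i - x a) = ∏ a ∈ B.filter (fun a => x a ≠ x i), (x i - x a) := by
    rw [hcard]
    exact B.sum_powersetCard_prod_eq_prod_filter _ _ fun a _ ha => by rw [not_not.1 ha, sub_self]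
  have hne : ∏ a ∈ B.filter (fun a => x a ≠ x i), (x i - x a) ≠ 0 :=
    Finset.prod_ne_zero_iff.2 fun a ha => sub_ne_zero.2 (Finset.mem_filter.1 ha).2.symm
  exact ⟨hsum, hsum ▸ hne, hne, by rw [hsum]⟩

theorem stmt_8 {ι : Type*} [DecidableEq ι] (x : ι → ℝ) (i : ι) (B : Finset ι)
    (hi : i ∉ B) :
    (∑ D ∈ Finset.powersetCard (B.card - (B.filter (fun a => x a = x i)).card) B,
        ∏ a ∈ D, (x i - x a)) = (∏ a ∈ B.filter (fun a => x a ≠ x i), (x i - x a)) ∧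
    (∑ D ∈ Finset.powersetCard (B.card - (B.filter (fun a => x a = x i)).card) B,
        ∏ a ∈ D, (x i - x a)) ≠ 0 ∧
    (∏ a ∈ B.filter (fun a => x a ≠ x i), (x i - x a)) ≠ 0 ∧
    (0 < (∑ D ∈ Finset.powersetCard (B.card - (B.filter (fun a => x a = x i)).card) B,
        ∏ a ∈ D, (x i - x a)) ↔
      0 < ∏ a ∈ B.filter (fun a => x a ≠ x i), (x i - x a)) :=
  stmt_8_general x i B
end

section
/- Let x : Fin n → ℝ, and for each index i let J_i = {j : x_j > x_i} and r_i = |J_i|. Then for every i, the number of indices j ∈ J_i satisfying |J_j| > (r_i − 1)/2 is at most ⌊r_i / 2⌋; in particular, if j is chosen uniformly at random from a nonempty J_i, then |J_j| > (r_i − 1)/2 holds with probability at most 1/2. -/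
/-! If `j₀` is an element of largest value `x_{j₀}` in `S = {j ∈ J_i : |J_j| > (r_i - 1)/2}`, then `J_{j₀}` and
`S` are disjoint subsets of `J_i`, so `|S| ≤ r_i - |J_{j₀}| ≤ r_i - ⌈r_i / 2⌉ = ⌊r_i / 2⌋`. -/

open Finset

section Above

variable {ι α : Type*} [Fintype ι] [LinearOrder α] (f : ι → α)

def above (i : ι) : Finset ι := univ.filter fun j => f i < f j

variable {f}

@[simp]
theorem mem_above {i j : ι} : j ∈ above f i ↔ f i < f j := by
  simp [above]

theorem above_subset_above_of_lt {i j : ι} (h : f i < f j) : above f j ⊆ above f i := fun _ hk =>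
  mem_above.2 (h.trans (mem_above.1 hk))

theorem card_above_add_card_le {i j₀ : ι} {T : Finset ι} (hT : T ⊆ above f i) (hj₀ : j₀ ∈ T)
    (hmax : ∀ k ∈ T, f k ≤ f j₀) : #(above f j₀) + #T ≤ #(above f i) := by
  classical
  have hdisj : Disjoint (above f j₀) T :=
    disjoint_left.2 fun k hk hkT => (hmax k hkT).not_gt (mem_above.1 hk)
  rw [← card_union_of_disjoint hdisj]
  exact card_le_card (union_subset (above_subset_above_of_lt (mem_above.1 (hT hj₀))) hT)

theorem card_filter_le_card_above_sub (i : ι) (m : ℕ) :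
    #((above f i).filter fun j => m ≤ #(above f j)) ≤ #(above f i) - m := by
  rcases ((above f i).filter fun j => m ≤ #(above f j)).eq_empty_or_nonempty with hT | hT
  · simp [hT]
  obtain ⟨j₀, hj₀, hmax⟩ := exists_max_image _ f hT
  have hsum := card_above_add_card_le (filter_subset _ _) hj₀ hmax
  have hm : m ≤ #(above f j₀) := (mem_filter.1 hj₀).2
  omega

end Above

theorem Nat.half_sub_lt_cast_iff {r a : ℕ} : ((r : ℝ) - 1) / 2 < a ↔ (r + 1) / 2 ≤ a := by
  rw [div_lt_iff₀ two_pos, sub_lt_iff_lt_add]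
  constructor
  · intro h
    have : r < a * 2 + 1 := by exact_mod_cast h
    omega
  · intro h
    have : r < a * 2 + 1 := by omega
    exact_mod_cast this

theorem Nat.cast_div_le_half_of_le_div_two {a b : ℕ} (h : a ≤ b / 2) : (a : ℝ) / b ≤ 1 / 2 := by
  rcases b.eq_zero_or_pos with rfl | hb
  · simp
  rw [div_le_iff₀ (by exact_mod_cast hb)]
  calc (a : ℝ) ≤ ((b / 2 : ℕ) : ℝ) := by exact_mod_cast h
    _ ≤ (b : ℝ) / 2 := Nat.cast_div_le
    _ = 1 / 2 * b := by ring

theorem stmt_13 {n : ℕ} (x : Fin n → ℝ) :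
    ∀ i : Fin n,
      ((Finset.univ.filter (fun j => x j > x i)).filter (fun j =>
          ((Finset.univ.filter (fun k => x k > x j)).card : ℝ) >
            (((Finset.univ.filter (fun j => x j > x i)).card : ℝ) - 1) / 2)).card ≤
        (Finset.univ.filter (fun j => x j > x i)).card / 2 ∧
      ((Finset.univ.filter (fun j => x j > x i)).Nonempty →
        (((Finset.univ.filter (fun j => x j > x i)).filter (fun j =>
            ((Finset.univ.filter (fun k => x k > x j)).card : ℝ) >
              (((Finset.univ.filter (fun j => x j > x i)).card : ℝ) - 1) / 2)).card : ℝ) /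
          ((Finset.univ.filter (fun j => x j > x i)).card : ℝ) ≤ 1 / 2) := by
  intro i
  have key : #((above x i).filter fun j => ((#(above x i) : ℝ) - 1) / 2 < #(above x j)) ≤
      #(above x i) / 2 := by
    simp only [Nat.half_sub_lt_cast_iff]
    exact (card_filter_le_card_above_sub i _).trans (by omega)
  exact ⟨key, fun _ => Nat.cast_div_le_half_of_le_div_two key⟩
end
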